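/- arXiv:2604.11196 — 5 statements merged into one kernel-verified Lean document; each statement's English description precedes it below -/
import Mathlib

section
/- Let p : ℝ² → ℝ be smooth and satisfy p² − 2s·p_r − p_s = 0 and p·p_s + 2s·p_{rs} − 4·p_r + p_{ss} = 0 on an open set. Then p·p_s − 2·p_r = 0 on that set. -/
/-- partial derivative in the first variable `r` -/
noncomputable def pr (p : ℝ → ℝ → ℝ) (r s : ℝ) : ℝ := deriv (fun r' => p r' s) r

/-- partial derivative in the second variable `s` -/
noncomputable def ps (p : ℝ → ℝ → ℝ) (r s : ℝ) : ℝ := deriv (fun s' => p r s') s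

/-- mixed second partial derivative `∂²p/∂r∂s` -/
noncomputable def prs (p : ℝ → ℝ → ℝ) (r s : ℝ) : ℝ := deriv (fun r' => ps p r' s) r

/-- second partial derivative `∂²p/∂s²` -/
noncomputable def pss (p : ℝ → ℝ → ℝ) (r s : ℝ) : ℝ := deriv (fun s' => ps p r s') s

/-- the two zero-curvature equations imply `p·p_s − 2·p_r = 0`. -/
theorem stmt_9 (p : ℝ → ℝ → ℝ) (hp : ContDiff ℝ (⊤ : ℕ∞) (fun q : ℝ × ℝ => p q.1 q.2))
    (U : Set (ℝ × ℝ)) (hU : IsOpen U)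
    (h1 : ∀ r s : ℝ, (r, s) ∈ U → (p r s) ^ 2 - 2 * s * pr p r s - ps p r s = 0)
    (h2 : ∀ r s : ℝ, (r, s) ∈ U →
      p r s * ps p r s + 2 * s * prs p r s - 4 * pr p r s + pss p r s = 0) :
    ∀ r s : ℝ, (r, s) ∈ U → p r s * ps p r s - 2 * pr p r s = 0 := by
  intro r s hrs
  set F : ℝ × ℝ → ℝ := fun q => p q.1 q.2 with hF
  have hpd : Differentiable ℝ F := hp.differentiable (by simp)
  have hf'd : Differentiable ℝ (fderiv ℝ F) :=
    (hp.fderiv_right (m := 1) (WithTop.coe_le_coe.mpr le_top)).differentiable (by simp)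
  -- curves
  have hcurve1 : ∀ a b : ℝ, HasDerivAt (fun r' : ℝ => ((r', b) : ℝ × ℝ)) (1, 0) a :=
    fun a b => (hasDerivAt_id a).prodMk (hasDerivAt_const a b)
  have hcurve2 : ∀ a b : ℝ, HasDerivAt (fun s' : ℝ => ((a, s') : ℝ × ℝ)) (0, 1) b :=
    fun a b => (hasDerivAt_const b a).prodMk (hasDerivAt_id b)
  -- first derivative formulas
  have hFr : ∀ a b : ℝ, HasDerivAt (fun r' => p r' b) (fderiv ℝ F (a, b) (1, 0)) a :=
    fun a b => by have := (hpd (a, b)).hasFDerivAt.comp_hasDerivAt a (hcurve1 a b); exact this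
  have hFs : ∀ a b : ℝ, HasDerivAt (fun s' => p a s') (fderiv ℝ F (a, b) (0, 1)) b :=
    fun a b => (hpd (a, b)).hasFDerivAt.comp_hasDerivAt b (hcurve2 a b)
  have hpr : ∀ a b : ℝ, pr p a b = fderiv ℝ F (a, b) (1, 0) := fun a b => (hFr a b).deriv
  have hps : ∀ a b : ℝ, ps p a b = fderiv ℝ F (a, b) (0, 1) := fun a b => (hFs a b).deriv
  -- second derivative formulas
  have hD1 : ∀ (v : ℝ × ℝ) (a b : ℝ),
      HasDerivAt (fun r' => fderiv ℝ F (r', b) v)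
        (fderiv ℝ (fderiv ℝ F) (a, b) (1, 0) v) a := by
    intro v a b
    have h2' := (hf'd (a, b)).hasFDerivAt.comp_hasDerivAt a (hcurve1 a b)
    have := h2'.clm_apply (hasDerivAt_const a v)
    simpa using this
  have hD2 : ∀ (v : ℝ × ℝ) (a b : ℝ),
      HasDerivAt (fun s' => fderiv ℝ F (a, s') v)
        (fderiv ℝ (fderiv ℝ F) (a, b) (0, 1) v) b := by
    intro v a b
    have h2' := (hf'd (a, b)).hasFDerivAt.comp_hasDerivAt b (hcurve2 a b)
    have := h2'.clm_apply (hasDerivAt_const b v)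
    simpa using this
  have hsymm := second_derivative_symmetric (f := F) (fun y => (hpd y).hasFDerivAt)
      ((hf'd (r, s)).hasFDerivAt) ((1 : ℝ), (0 : ℝ)) (0, 1)
  have hprs : prs p r s = fderiv ℝ (fderiv ℝ F) (r, s) (0, 1) (1, 0) := by
    have : prs p r s = fderiv ℝ (fderiv ℝ F) (r, s) (1, 0) (0, 1) := by
      have heq : (fun r' => ps p r' s) = fun r' => fderiv ℝ F (r', s) (0, 1) :=
        funext fun a => hps a s
      rw [prs, heq]
      exact (hD1 (0, 1) r s).deriv
    rw [this, hsymm]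
  have hpss : pss p r s = fderiv ℝ (fderiv ℝ F) (r, s) (0, 1) (0, 1) := by
    have heq : (fun s' => ps p r s') = fun s' => fderiv ℝ F (r, s') (0, 1) :=
      funext fun b => hps r b
    rw [pss, heq]
    exact (hD2 (0, 1) r s).deriv
  -- differentiate equation 1 in s
  have hg : HasDerivAt (fun s' => (p r s') ^ 2 - 2 * s' * pr p r s' - ps p r s')
      (2 * p r s * ps p r s -
        (2 * pr p r s + 2 * s * fderiv ℝ (fderiv ℝ F) (r, s) (0, 1) (1, 0)) -
        pss p r s) s := by
    have ha : HasDerivAt (fun s' => (p r s') ^ 2) (2 * p r s * ps p r s) s := by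
      have := (hFs r s).fun_pow 2
      simpa [hps r s, mul_comm, mul_assoc] using this
    have hb : HasDerivAt (fun s' => 2 * s' * pr p r s')
        (2 * pr p r s + 2 * s * fderiv ℝ (fderiv ℝ F) (r, s) (0, 1) (1, 0)) s := by
      have heq : (fun s' => 2 * s' * pr p r s') =
          fun s' => (2 * s') * fderiv ℝ F (r, s') (1, 0) := by
        funext b; rw [hpr r b]
      rw [heq]
      have h2s : HasDerivAt (fun s' : ℝ => 2 * s') 2 s := by
        simpa using (hasDerivAt_id s).const_mul (2 : ℝ)
      have := h2s.fun_mul (hD2 (1, 0) r s)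
      have hsy : fderiv ℝ (fderiv ℝ F) (r, s) (0, 1) (1, 0) =
          fderiv ℝ (fderiv ℝ F) (r, s) (1, 0) (0, 1) := hsymm.symm
      rw [hpr r s]
      convert this using 1
    have hc : HasDerivAt (fun s' => ps p r s') (pss p r s) s := by
      have heq : (fun s' => ps p r s') = fun s' => fderiv ℝ F (r, s') (0, 1) :=
        funext fun b => hps r b
      rw [heq, hpss]
      exact hD2 (0, 1) r s
    exact (ha.sub hb).sub hc
  -- the function is eventually zero near s
  have hev : (fun s' => (p r s') ^ 2 - 2 * s' * pr p r s' - ps p r s') =ᶠ[nhds s]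
      (fun _ => (0 : ℝ)) := by
    have hopen : IsOpen {b : ℝ | (r, b) ∈ U} := hU.preimage (by fun_prop)
    filter_upwards [hopen.mem_nhds (by exact hrs)] with b hb
    exact h1 r b hb
  have hzero : (2 * p r s * ps p r s -
      (2 * pr p r s + 2 * s * fderiv ℝ (fderiv ℝ F) (r, s) (0, 1) (1, 0)) -
      pss p r s) = 0 := by
    have := hg.deriv
    rw [hev.deriv_eq] at this
    simpa using this.symm
  have h2' := h2 r s hrs
  rw [hprs] at h2'
  rw [hpss] at hzero h2'
  nlinarith [hzero, h2']
end

section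
/- Fix a constant c > 0 and define p(r,s) = (s + √(s² − r + c))/(c − r) on the domain {(r,s) : 0 ≤ r < c, s² − r + c > 0}. Then p satisfies p² − 2s·p_r − p_s = 0 and p·p_s + 2s·p_{rs} − 4·p_r + p_{ss} = 0. -/
open Real Filter Topology

noncomputable def sprayCoeff (c r s : ℝ) : ℝ := (s + √(s ^ 2 - r + c)) / (c - r)

section SprayCoeff

variable {c r s : ℝ}

lemma hasDerivAt_sqrt_disc_s (h : 0 < s ^ 2 - r + c) :
    HasDerivAt (fun s' => √(s' ^ 2 - r + c)) (s / √(s ^ 2 - r + c)) s := by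
  refine ((((hasDerivAt_pow 2 s).sub_const r).add_const c).sqrt h.ne').congr_deriv ?_
  field_simp
  norm_num

lemma hasDerivAt_sqrt_disc_r (h : 0 < s ^ 2 - r + c) :
    HasDerivAt (fun r' => √(s ^ 2 - r' + c)) (-(2 * √(s ^ 2 - r + c))⁻¹) r := by
  refine ((((hasDerivAt_id' r).const_sub (s ^ 2)).add_const c).sqrt h.ne').congr_deriv ?_
  rw [neg_div, one_div]

lemma hasDerivAt_sprayCoeff_s (h : 0 < s ^ 2 - r + c) :
    HasDerivAt (fun s' => sprayCoeff c r s') (sprayCoeff c r s / √(s ^ 2 - r + c)) s := by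
  have hQ : √(s ^ 2 - r + c) ≠ 0 := (sqrt_pos.2 h).ne'
  refine (((hasDerivAt_id' s).add (hasDerivAt_sqrt_disc_s h)).div_const (c - r)).congr_deriv ?_
  rw [sprayCoeff, div_right_comm, add_div s, div_self hQ, add_comm]

lemma hasDerivAt_sprayCoeff_r (h : 0 < s ^ 2 - r + c) (hr : r ≠ c) :
    HasDerivAt (fun r' => sprayCoeff c r' s)
      ((sprayCoeff c r s - (2 * √(s ^ 2 - r + c))⁻¹) / (c - r)) r := by
  have hA : c - r ≠ 0 := sub_ne_zero.2 hr.symm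
  refine (((hasDerivAt_sqrt_disc_r h).const_add s).div
    ((hasDerivAt_id' r).const_sub c) hA).congr_deriv ?_
  rw [sprayCoeff]
  field_simp
  ring

lemma ps_sprayCoeff (h : 0 < s ^ 2 - r + c) :
    ps (sprayCoeff c) r s = sprayCoeff c r s / √(s ^ 2 - r + c) :=
  (hasDerivAt_sprayCoeff_s h).deriv

lemma pr_sprayCoeff (h : 0 < s ^ 2 - r + c) (hr : r ≠ c) :
    pr (sprayCoeff c) r s = (sprayCoeff c r s - (2 * √(s ^ 2 - r + c))⁻¹) / (c - r) :=
  (hasDerivAt_sprayCoeff_r h hr).deriv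

lemma ps_sprayCoeff_eventuallyEq_r (h : 0 < s ^ 2 - r + c) :
    (fun r' => ps (sprayCoeff c) r' s) =ᶠ[𝓝 r]
      fun r' => sprayCoeff c r' s / √(s ^ 2 - r' + c) := by
  have hcont : Continuous fun r' : ℝ => s ^ 2 - r' + c := by fun_prop
  exact (hcont.continuousAt.eventually (lt_mem_nhds h)).mono fun _ => ps_sprayCoeff

lemma ps_sprayCoeff_eventuallyEq_s (h : 0 < s ^ 2 - r + c) :
    (fun s' => ps (sprayCoeff c) r s') =ᶠ[𝓝 s]
      fun s' => sprayCoeff c r s' / √(s' ^ 2 - r + c) := by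
  have hcont : Continuous fun s' : ℝ => s' ^ 2 - r + c := by fun_prop
  exact (hcont.continuousAt.eventually (lt_mem_nhds h)).mono fun _ => ps_sprayCoeff

lemma prs_sprayCoeff (h : 0 < s ^ 2 - r + c) (hr : r ≠ c) :
    prs (sprayCoeff c) r s =
      (pr (sprayCoeff c) r s * √(s ^ 2 - r + c)
        - sprayCoeff c r s * -(2 * √(s ^ 2 - r + c))⁻¹) / √(s ^ 2 - r + c) ^ 2 := by
  rw [prs, (ps_sprayCoeff_eventuallyEq_r h).deriv_eq, pr_sprayCoeff h hr]
  exact ((hasDerivAt_sprayCoeff_r h hr).div (hasDerivAt_sqrt_disc_r h)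
    (sqrt_pos.2 h).ne').deriv

lemma pss_sprayCoeff (h : 0 < s ^ 2 - r + c) :
    pss (sprayCoeff c) r s =
      (ps (sprayCoeff c) r s * √(s ^ 2 - r + c)
        - sprayCoeff c r s * (s / √(s ^ 2 - r + c))) / √(s ^ 2 - r + c) ^ 2 := by
  rw [pss, (ps_sprayCoeff_eventuallyEq_s h).deriv_eq, ps_sprayCoeff h]
  exact ((hasDerivAt_sprayCoeff_s h).div (hasDerivAt_sqrt_disc_s h)
    (sqrt_pos.2 h).ne').deriv

end SprayCoeff

theorem stmt_11_general (c : ℝ) (p : ℝ → ℝ → ℝ)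
    (hp : ∀ r s, p r s = (s + Real.sqrt (s ^ 2 - r + c)) / (c - r)) :
    ∀ r s : ℝ, 0 ≤ r → r < c → 0 < s ^ 2 - r + c →
      (p r s) ^ 2 - 2 * s * pr p r s - ps p r s = 0 ∧
      p r s * ps p r s + 2 * s * prs p r s - 4 * pr p r s + pss p r s = 0 := by
  obtain rfl : p = sprayCoeff c := funext₂ hp
  intro r s _ hr h
  rw [pss_sprayCoeff h, prs_sprayCoeff h hr.ne, pr_sprayCoeff h hr.ne, ps_sprayCoeff h]
  unfold sprayCoeff
  set Q := √(s ^ 2 - r + c)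
  have hQ : Q ^ 2 = s ^ 2 - r + c := sq_sqrt h.le
  have hQ0 : Q ≠ 0 := (sqrt_pos.2 h).ne'
  have hA : c - r ≠ 0 := sub_ne_zero.2 hr.ne'
  constructor
  · field_simp
    linear_combination Q * hQ
  · field_simp
    linear_combination -6 * Q ^ 2 * hQ

/-- `p(r,s) = (s + √(s² − r + c))/(c − r)` satisfies the two
zero-curvature equations on its natural domain. -/
theorem stmt_11 (c : ℝ) (hc : 0 < c) (p : ℝ → ℝ → ℝ)
    (hp : ∀ r s, p r s = (s + Real.sqrt (s ^ 2 - r + c)) / (c - r)) :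
    ∀ r s : ℝ, 0 ≤ r → r < c → 0 < s ^ 2 - r + c →
      (p r s) ^ 2 - 2 * s * pr p r s - ps p r s = 0 ∧
      p r s * ps p r s + 2 * s * prs p r s - 4 * pr p r s + pss p r s = 0 :=
  stmt_11_general c p hp
end

section
/- Let h : ℝ → ℝ be smooth with h(r) > 0, and define p(r,s) = (s + √(s² + 2h(r)))/(2h(r)). If p satisfies p² − 2s·p_r − p_s = 0 on an open set of (r,s) with s ranging over an interval containing more than one point, then h′(r) = −1/2, i.e., h(r) = (c − r)/2 for some constant c. -/
/-- auxiliary algebra lemma -/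
lemma stmt12_alg (H q dh s : ℝ) (hH : 0 < H) (hq : 0 < q) (hq2 : q^2 = s^2 + 2*H)
    (heq : ((s+q)/(2*H))^2 - 2*s*(((2*dh/(2*q))*(2*H) - (s+q)*(2*dh))/((2*H)^2)) - (1 + 2*s/(2*q))/(2*H) = 0) :
    2*s*(s*q+s^2+H)*(1+2*dh) = 0 := by
  field_simp at heq
  have key : 32*q*H^3*(2*s*(s*q+s^2+H)*(1+2*dh)) = 0 := by
    linear_combination (32*q*H^3) * (heq - (q + 2*s + 4*s*dh) * hq2)
  have h32 : (32:ℝ)*q*H^3 ≠ 0 := by positivity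
  exact (mul_eq_zero.1 key).resolve_left h32

/-- the main derivative computation: at any point of `U`, `deriv h r = -1/2`
provided `s ≠ 0`. -/
lemma stmt12_key (h : ℝ → ℝ) (hsm : ContDiff ℝ (⊤ : ℕ∞) h) (hpos : ∀ r, 0 < h r)
    (p : ℝ → ℝ → ℝ)
    (hp : ∀ r s, p r s = (s + Real.sqrt (s ^ 2 + 2 * h r)) / (2 * h r))
    (r s : ℝ) (hs : s ≠ 0)
    (hpde : (p r s) ^ 2 - 2 * s * pr p r s - ps p r s = 0) :
    deriv h r = -(1 / 2) := by
  set q := Real.sqrt (s ^ 2 + 2 * h r) with hqdef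
  have hDpos : (0:ℝ) < s ^ 2 + 2 * h r := by nlinarith [hpos r, sq_nonneg s]
  have hqpos : 0 < q := Real.sqrt_pos.2 hDpos
  have hq2 : q ^ 2 = s ^ 2 + 2 * h r := Real.sq_sqrt hDpos.le
  have hh : HasDerivAt h (deriv h r) r := (hsm.differentiable (by simp) r).hasDerivAt
  -- compute pr
  have hprval : pr p r s = ((2 * deriv h r / (2 * q)) * (2 * h r)
      - (s + q) * (2 * deriv h r)) / (2 * h r) ^ 2 := by
    have hfun : (fun r' => p r' s) =
        fun r' => (s + Real.sqrt (s ^ 2 + 2 * h r')) / (2 * h r') :=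
      funext fun r' => hp r' s
    rw [pr, hfun]
    have hin : HasDerivAt (fun r' => s ^ 2 + 2 * h r') (2 * deriv h r) r :=
      (hh.const_mul 2).const_add (s ^ 2)
    have hsq : HasDerivAt (fun r' => Real.sqrt (s ^ 2 + 2 * h r'))
        (2 * deriv h r / (2 * q)) r := hin.sqrt hDpos.ne'
    have hnum := hsq.const_add s
    have hden : HasDerivAt (fun r' => 2 * h r') (2 * deriv h r) r := hh.const_mul 2
    exact (hnum.div hden (by have := hpos r; positivity)).deriv
  -- compute ps
  have hpsval : ps p r s = (1 + 2 * s / (2 * q)) / (2 * h r) := by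
    have hfun : (fun s' => p r s') =
        fun s' => (s' + Real.sqrt (s' ^ 2 + 2 * h r)) / (2 * h r) :=
      funext fun s' => hp r s'
    rw [ps, hfun]
    have hin : HasDerivAt (fun s' => s' ^ 2 + 2 * h r) (2 * s) s := by
      simpa using (hasDerivAt_pow 2 s).add_const (2 * h r)
    have hsq := hin.sqrt hDpos.ne'
    have hnum := (hasDerivAt_id s).add hsq
    simpa using (hnum.div_const (2 * h r)).deriv
  rw [hp r s, hprval, hpsval] at hpde
  have key := stmt12_alg (h r) q (deriv h r) s (hpos r) hqpos hq2 (by linarith [hpde])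
  have hsqne : s + q ≠ 0 := by
    intro h0
    have : s = -q := by linarith
    rw [this] at hq2; nlinarith [hpos r]
  have hfac : 0 < s * q + s ^ 2 + h r := by
    have h1 : 0 < (s + q) ^ 2 := by positivity
    nlinarith
  have h2s : (2:ℝ) * s * (s * q + s ^ 2 + h r) ≠ 0 := by
    rcases hs.lt_or_gt with hlt | hlt
    · exact ne_of_lt (by nlinarith)
    · exact ne_of_gt (by nlinarith)
  have : 1 + 2 * deriv h r = 0 := by
    rcases mul_eq_zero.1 key with h1 | h1
    · exact absurd h1 h2s
    · exact h1
  linarith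

/-- if `p = (s + √(s² + 2h(r)))/(2h(r))` with `h > 0` satisfies
`p² − 2s·p_r − p_s = 0` on a nonempty open set, then `h' = −1/2` there, and on a
connected such set `h(r) = (c − r)/2` for a constant `c`. -/
theorem stmt_12 (h : ℝ → ℝ) (hsm : ContDiff ℝ (⊤ : ℕ∞) h) (hpos : ∀ r, 0 < h r)
    (p : ℝ → ℝ → ℝ)
    (hp : ∀ r s, p r s = (s + Real.sqrt (s ^ 2 + 2 * h r)) / (2 * h r))
    (U : Set (ℝ × ℝ)) (hU : IsOpen U) (hUne : U.Nonempty) (hUc : IsConnected U)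
    (hpde : ∀ r s : ℝ, (r, s) ∈ U →
      (p r s) ^ 2 - 2 * s * pr p r s - ps p r s = 0) :
    (∀ r s : ℝ, (r, s) ∈ U → deriv h r = -(1 / 2)) ∧
      ∃ c : ℝ, ∀ r s : ℝ, (r, s) ∈ U → h r = (c - r) / 2 := by
  -- first part
  have part1 : ∀ r s : ℝ, (r, s) ∈ U → deriv h r = -(1 / 2) := by
    intro r s hmem
    -- find s' ≠ 0 with (r, s') ∈ U
    have hVopen : IsOpen {s' : ℝ | (r, s') ∈ U} :=
      hU.preimage (by continuity : Continuous fun s' : ℝ => (r, s'))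
    obtain ⟨ε, hε, hball⟩ := Metric.isOpen_iff.1 hVopen s hmem
    obtain ⟨s', hs'ne, hs'mem⟩ : ∃ s' : ℝ, s' ≠ 0 ∧ (r, s') ∈ U := by
      by_cases h0 : s + ε / 2 = 0
      · refine ⟨s - ε / 2, ?_, hball ?_⟩
        · intro h1; nlinarith
        · simp only [Metric.mem_ball, Real.dist_eq, Set.mem_setOf_eq]
          rw [show s - ε / 2 - s = -(ε / 2) by ring, abs_neg, abs_of_pos (half_pos hε)]
          linarith
      · refine ⟨s + ε / 2, h0, hball ?_⟩
        simp only [Metric.mem_ball, Real.dist_eq]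
        rw [show s + ε/2 - s = ε/2 by ring, abs_of_pos (half_pos hε)]
        linarith
    exact stmt12_key h hsm hpos p hp r s' hs'ne (hpde r s' hs'mem)
  refine ⟨part1, ?_⟩
  -- second part: the function G(x) = 2*h x.1 + x.1 is locally constant on U
  set G : ℝ × ℝ → ℝ := fun x => 2 * h x.1 + x.1 with hGdef
  have hGdiff : Differentiable ℝ G := by
    have h1 : Differentiable ℝ h := hsm.differentiable (by simp)
    fun_prop
  have hlocal : ∀ x ∈ U, ∃ ε > 0, Metric.ball x ε ⊆ U ∧
      ∀ y ∈ Metric.ball x ε, G y = G x := by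
    intro x hx
    obtain ⟨ε, hε, hball⟩ := Metric.isOpen_iff.1 hU x hx
    refine ⟨ε, hε, hball, ?_⟩
    intro y hy
    have hfd0 : ∀ z ∈ Metric.ball x ε, fderiv ℝ G z = 0 := by
      intro z hz
      have hzU : z ∈ U := hball hz
      have hdz : deriv h z.1 = -(1/2) := part1 z.1 z.2 hzU
      have hd : HasDerivAt (fun t => 2 * h t + t) 0 z.1 := by
        have := (((hsm.differentiable (by simp) z.1).hasDerivAt).const_mul 2).add
          (hasDerivAt_id' z.1)
        exact this.congr_deriv (by rw [hdz]; norm_num)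
      have hG : HasFDerivAt G (0 : ℝ × ℝ →L[ℝ] ℝ) z := by
        have := hd.hasFDerivAt.comp z
          (hasFDerivAt_fst : HasFDerivAt Prod.fst (ContinuousLinearMap.fst ℝ ℝ ℝ) z)
        exact this.congr_fderiv (by ext <;> simp)
      exact hG.fderiv
    have hconst := (convex_ball x ε).is_const_of_fderivWithin_eq_zero
      (f := G) (hGdiff.differentiableOn) ?_ hy (Metric.mem_ball_self hε)
    · exact hconst
    · intro z hz
      rw [fderivWithin_of_isOpen Metric.isOpen_ball hz]
      exact hfd0 z hz
  obtain ⟨x₀, hx₀⟩ := hUne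
  refine ⟨G x₀, ?_⟩
  have hGconst : ∀ x ∈ U, G x = G x₀ := by
    set V : Set (ℝ × ℝ) := {x | x ∈ U ∧ G x = G x₀} with hVdef
    set W : Set (ℝ × ℝ) := {x | x ∈ U ∧ G x ≠ G x₀} with hWdef
    have hVopen : IsOpen V := by
      rw [Metric.isOpen_iff]
      intro x hx
      obtain ⟨ε, hε, hball, hc⟩ := hlocal x hx.1
      exact ⟨ε, hε, fun y hy => ⟨hball hy, (hc y hy).trans hx.2⟩⟩
    have hWopen : IsOpen W := by
      rw [Metric.isOpen_iff]
      intro x hx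
      obtain ⟨ε, hε, hball, hc⟩ := hlocal x hx.1
      exact ⟨ε, hε, fun y hy => ⟨hball hy, (hc y hy) ▸ hx.2⟩⟩
    by_contra hcon
    push_neg at hcon
    obtain ⟨x₁, hx₁U, hx₁ne⟩ := hcon
    have := hUc.isPreconnected V W hVopen hWopen
      (fun x hx => by by_cases hG : G x = G x₀ <;> [exact Or.inl ⟨hx, hG⟩; exact Or.inr ⟨hx, hG⟩])
      ⟨x₀, hx₀, hx₀, rfl⟩ ⟨x₁, hx₁U, hx₁U, hx₁ne⟩
    obtain ⟨z, _, ⟨_, hz1⟩, ⟨_, hz2⟩⟩ := this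
    exact hz2 hz1
  intro r s hmem
  have := hGconst (r, s) hmem
  simp only [hGdef] at this
  linarith
end

section
/- Fix a constant c > 0 and define p(r,s) = (√(s² − r + c) + s)/(2(c − r)) + C·s for a real constant C, on the domain {(r,s) : 0 ≤ r < c, s² − r + c > 0}. Then p satisfies s·p_{rs} − p_r + (1/2)·p_{ss} = 0. -/
/-!
Write `u = √(s² − r + c)`. For `r < c` we have `u > |s|`, and since `(u + s)(u − s) = c − r`,
`p = 1 / (2(u − s)) + C s`. Using `∂u/∂s = s / u` and `∂u/∂r = −1 / (2u)` one finds
`p_r = 1 / (4u(u − s)²)`, `p_s = 1 / (2u(u − s)) + C`, `p_{rs} = (2u − s) / (4u³(u − s)²)` and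
`p_{ss} = 1 / (2u³)`, and with these values the equation becomes the polynomial identity
`s(2u − s) − u² + (u − s)² = 0`, in which `r` no longer occurs.
-/

open Filter Topology

section FunkFactor

variable {c r s : ℝ}

lemma sqrt_sq_sub_add_sub_pos (h : r < c) : 0 < √(s ^ 2 - r + c) - s :=
  sub_pos.2 <| calc
    s ≤ |s| := le_abs_self s
    _ = √(s ^ 2) := (Real.sqrt_sq_eq_abs s).symm
    _ < √(s ^ 2 - r + c) := Real.sqrt_lt_sqrt (sq_nonneg s) (by linarith)

lemma sq_sub_add_pos (h : r < c) : 0 < s ^ 2 - r + c := by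
  linarith [sq_nonneg s]

lemma sqrt_sq_sub_add_pos (h : r < c) : 0 < √(s ^ 2 - r + c) :=
  Real.sqrt_pos.2 (sq_sub_add_pos h)

lemma add_div_eq_one_div_sub (h : r < c) :
    (√(s ^ 2 - r + c) + s) / (2 * (c - r)) = 1 / (2 * (√(s ^ 2 - r + c) - s)) := by
  have hsq : √(s ^ 2 - r + c) ^ 2 = s ^ 2 - r + c := Real.sq_sqrt (sq_sub_add_pos h).le
  have hw : √(s ^ 2 - r + c) - s ≠ 0 := (sqrt_sq_sub_add_sub_pos h).ne'
  have hcr : c - r ≠ 0 := (sub_pos.2 h).ne'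
  rw [div_eq_div_iff (by positivity) (by positivity)]
  linear_combination 2 * hsq

lemma hasDerivAt_sqrt_sq_sub_add_s (hq : 0 < s ^ 2 - r + c) :
    HasDerivAt (fun s => √(s ^ 2 - r + c)) (s / √(s ^ 2 - r + c)) s := by
  have hd : HasDerivAt (fun x : ℝ => x ^ 2 - r + c) (2 * s) s := by
    simpa using ((hasDerivAt_pow 2 s).sub_const r).add_const c
  refine ((Real.hasDerivAt_sqrt hq.ne').comp s hd).congr_deriv ?_
  have := (Real.sqrt_pos.2 hq).ne'
  field_simp

lemma hasDerivAt_sqrt_sq_sub_add_r (hq : 0 < s ^ 2 - r + c) :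
    HasDerivAt (fun r => √(s ^ 2 - r + c)) (-1 / (2 * √(s ^ 2 - r + c))) r := by
  have hd : HasDerivAt (fun x : ℝ => s ^ 2 - x + c) (-1) r := by
    simpa using ((hasDerivAt_id r).const_sub (s ^ 2)).add_const c
  refine ((Real.hasDerivAt_sqrt hq.ne').comp r hd).congr_deriv ?_
  field_simp

lemma hasDerivAt_one_div_sqrt_sub_r (h : r < c) :
    HasDerivAt (fun r => 1 / (2 * (√(s ^ 2 - r + c) - s)))
      (1 / (4 * √(s ^ 2 - r + c) * (√(s ^ 2 - r + c) - s) ^ 2)) r := by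
  have hw := (sqrt_sq_sub_add_sub_pos (s := s) h).ne'
  have hu := (sqrt_sq_sub_add_pos (s := s) h).ne'
  have hne : 2 * (√(s ^ 2 - r + c) - s) ≠ 0 := by positivity
  have hd := hasDerivAt_sqrt_sq_sub_add_r (sq_sub_add_pos (s := s) h)
  refine ((hasDerivAt_const r 1).fun_div ((hd.sub_const s).const_mul 2) hne).congr_deriv ?_
  field_simp
  ring

lemma hasDerivAt_one_div_sqrt_sub_s (h : r < c) :
    HasDerivAt (fun s => 1 / (2 * (√(s ^ 2 - r + c) - s)))
      (1 / (2 * √(s ^ 2 - r + c) * (√(s ^ 2 - r + c) - s))) s := by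
  have hw := (sqrt_sq_sub_add_sub_pos (s := s) h).ne'
  have hu := (sqrt_sq_sub_add_pos (s := s) h).ne'
  have hne : 2 * (√(s ^ 2 - r + c) - s) ≠ 0 := by positivity
  have hd := hasDerivAt_sqrt_sq_sub_add_s (sq_sub_add_pos (s := s) h)
  refine ((hasDerivAt_const s 1).fun_div ((hd.fun_sub (hasDerivAt_id' s)).const_mul 2)
    hne).congr_deriv ?_
  field_simp
  ring

lemma hasDerivAt_one_div_sqrt_mul_sqrt_sub_r (h : r < c) :
    HasDerivAt (fun r => 1 / (2 * √(s ^ 2 - r + c) * (√(s ^ 2 - r + c) - s)))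
      ((2 * √(s ^ 2 - r + c) - s) /
        (4 * √(s ^ 2 - r + c) ^ 3 * (√(s ^ 2 - r + c) - s) ^ 2)) r := by
  have hw := (sqrt_sq_sub_add_sub_pos (s := s) h).ne'
  have hu := (sqrt_sq_sub_add_pos (s := s) h).ne'
  have hne : 2 * √(s ^ 2 - r + c) * (√(s ^ 2 - r + c) - s) ≠ 0 := by positivity
  have hd := hasDerivAt_sqrt_sq_sub_add_r (sq_sub_add_pos (s := s) h)
  refine ((hasDerivAt_const r 1).fun_div ((hd.const_mul 2).fun_mul (hd.sub_const s))
    hne).congr_deriv ?_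
  field_simp
  ring

lemma hasDerivAt_one_div_sqrt_mul_sqrt_sub_s (h : r < c) :
    HasDerivAt (fun s => 1 / (2 * √(s ^ 2 - r + c) * (√(s ^ 2 - r + c) - s)))
      (1 / (2 * √(s ^ 2 - r + c) ^ 3)) s := by
  have hw := (sqrt_sq_sub_add_sub_pos (s := s) h).ne'
  have hu := (sqrt_sq_sub_add_pos (s := s) h).ne'
  have hne : 2 * √(s ^ 2 - r + c) * (√(s ^ 2 - r + c) - s) ≠ 0 := by positivity
  have hd := hasDerivAt_sqrt_sq_sub_add_s (sq_sub_add_pos (s := s) h)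
  refine ((hasDerivAt_const s 1).fun_div
    ((hd.const_mul 2).fun_mul (hd.fun_sub (hasDerivAt_id' s))) hne).congr_deriv ?_
  field_simp
  ring

end FunkFactor

section PartialDerivatives

variable {c C r s : ℝ} {p : ℝ → ℝ → ℝ}

lemma pr_eq (hp : ∀ r s, r < c → p r s = 1 / (2 * (√(s ^ 2 - r + c) - s)) + C * s)
    (h : r < c) : pr p r s = 1 / (4 * √(s ^ 2 - r + c) * (√(s ^ 2 - r + c) - s) ^ 2) := by
  have hp' : (fun r' => p r' s) =ᶠ[𝓝 r] fun r' => 1 / (2 * (√(s ^ 2 - r' + c) - s)) + C * s :=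
    (eventually_lt_nhds h).mono fun r' hr' => hp r' s hr'
  rw [pr, hp'.deriv_eq]
  exact ((hasDerivAt_one_div_sqrt_sub_r h).add_const _).deriv

lemma ps_eq (hp : ∀ r s, r < c → p r s = 1 / (2 * (√(s ^ 2 - r + c) - s)) + C * s)
    (h : r < c) : ps p r s = 1 / (2 * √(s ^ 2 - r + c) * (√(s ^ 2 - r + c) - s)) + C := by
  have hp' : (fun s' => p r s') = fun s' => 1 / (2 * (√(s' ^ 2 - r + c) - s')) + C * s' :=
    funext fun s' => hp r s' h
  rw [ps, hp']
  exact (((hasDerivAt_one_div_sqrt_sub_s h).fun_add ((hasDerivAt_id' s).const_mul C)).congr_deriv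
    (by rw [mul_one])).deriv

lemma prs_eq (hp : ∀ r s, r < c → p r s = 1 / (2 * (√(s ^ 2 - r + c) - s)) + C * s)
    (h : r < c) : prs p r s = (2 * √(s ^ 2 - r + c) - s) /
      (4 * √(s ^ 2 - r + c) ^ 3 * (√(s ^ 2 - r + c) - s) ^ 2) := by
  have hps : (fun r' => ps p r' s) =ᶠ[𝓝 r]
      fun r' => 1 / (2 * √(s ^ 2 - r' + c) * (√(s ^ 2 - r' + c) - s)) + C :=
    (eventually_lt_nhds h).mono fun r' hr' => ps_eq hp hr'
  rw [prs, hps.deriv_eq]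
  exact ((hasDerivAt_one_div_sqrt_mul_sqrt_sub_r h).add_const C).deriv

lemma pss_eq (hp : ∀ r s, r < c → p r s = 1 / (2 * (√(s ^ 2 - r + c) - s)) + C * s)
    (h : r < c) : pss p r s = 1 / (2 * √(s ^ 2 - r + c) ^ 3) := by
  have hps : (fun s' => ps p r s') =
      fun s' => 1 / (2 * √(s' ^ 2 - r + c) * (√(s' ^ 2 - r + c) - s')) + C :=
    funext fun s' => ps_eq hp h
  rw [pss, hps]
  exact ((hasDerivAt_one_div_sqrt_mul_sqrt_sub_s h).add_const C).deriv

end PartialDerivatives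

theorem stmt_17_general (c C : ℝ) (p : ℝ → ℝ → ℝ)
    (hp : ∀ r s, p r s = (Real.sqrt (s ^ 2 - r + c) + s) / (2 * (c - r)) + C * s) :
    ∀ r s : ℝ, 0 ≤ r → r < c → 0 < s ^ 2 - r + c →
      s * prs p r s - pr p r s + (1 / 2) * pss p r s = 0 := by
  have hp' : ∀ r s, r < c → p r s = 1 / (2 * (√(s ^ 2 - r + c) - s)) + C * s := fun r s h => by
    rw [hp, add_div_eq_one_div_sub h]
  intro r s _ h _
  have hw := (sqrt_sq_sub_add_sub_pos (s := s) h).ne'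
  have hu := (sqrt_sq_sub_add_pos (s := s) h).ne'
  rw [prs_eq hp' h, pr_eq hp' h, pss_eq hp' h]
  field_simp
  ring

/-- `p(r,s) = (√(s² − r + c) + s)/(2(c − r)) + C·s` satisfies
`s·p_{rs} − p_r + (1/2)·p_{ss} = 0` on its domain. -/
theorem stmt_17 (c C : ℝ) (hc : 0 < c) (p : ℝ → ℝ → ℝ)
    (hp : ∀ r s, p r s = (Real.sqrt (s ^ 2 - r + c) + s) / (2 * (c - r)) + C * s) :
    ∀ r s : ℝ, 0 ≤ r → r < c → 0 < s ^ 2 - r + c →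
      s * prs p r s - pr p r s + (1 / 2) * pss p r s = 0 :=
  stmt_17_general c C p hp
end

section
/- Let u, v : ℝ → ℝ be smooth, let f(r,s) = F(r,s) + v(r) where F is a smooth function on an open set with s > 0 satisfying F_s(r,s) = u(r − s²)/s², and set p(r,s) = s·f(r,s). Then p satisfies s·p_{rs} − p_r + (1/2)·p_{ss} = 0. -/
/-- sufficiency: if `F_s(r,s) = u(r−s²)/s²` and
`p(r,s) = s·(F(r,s) + v(r))`, then `s·p_{rs} − p_r + (1/2)·p_{ss} = 0` for `s > 0`. -/
theorem stmt_18 (u v : ℝ → ℝ) (hu : ContDiff ℝ (⊤ : ℕ∞) u) (hv : ContDiff ℝ (⊤ : ℕ∞) v)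
    (F : ℝ → ℝ → ℝ)
    (hF : ContDiffOn ℝ (⊤ : ℕ∞) (fun q : ℝ × ℝ => F q.1 q.2) {q : ℝ × ℝ | 0 < q.2})
    (hFs : ∀ r s : ℝ, 0 < s → ps F r s = u (r - s ^ 2) / s ^ 2)
    (p : ℝ → ℝ → ℝ) (hp : ∀ r s, p r s = s * (F r s + v r)) :
    ∀ r s : ℝ, 0 < s →
      s * prs p r s - pr p r s + (1 / 2) * pss p r s = 0 := by
  have hopen : IsOpen {q : ℝ × ℝ | 0 < q.2} := isOpen_lt continuous_const continuous_snd
  have hudiff : Differentiable ℝ u := hu.differentiable (by simp)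
  have hvdiff : Differentiable ℝ v := hv.differentiable (by simp)
  -- differentiability of F in each variable at points with s > 0
  have hFr : ∀ r s : ℝ, 0 < s → DifferentiableAt ℝ (fun r' => F r' s) r := by
    intro r s hs
    have h1 : ContDiffAt ℝ (⊤ : ℕ∞) (fun q : ℝ × ℝ => F q.1 q.2) (r, s) :=
      hF.contDiffAt (hopen.mem_nhds hs)
    have h2 : ContDiffAt ℝ (⊤ : ℕ∞) (fun r' : ℝ => ((r', s) : ℝ × ℝ)) r :=
      ContDiffAt.prodMk contDiffAt_id contDiffAt_const
    exact (h1.comp r h2).differentiableAt (by simp)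
  have hFsd : ∀ r s : ℝ, 0 < s → HasDerivAt (fun s' => F r s') (u (r - s ^ 2) / s ^ 2) s := by
    intro r s hs
    have h1 : ContDiffAt ℝ (⊤ : ℕ∞) (fun q : ℝ × ℝ => F q.1 q.2) (r, s) :=
      hF.contDiffAt (hopen.mem_nhds hs)
    have h2 : ContDiffAt ℝ (⊤ : ℕ∞) (fun s' : ℝ => ((r, s') : ℝ × ℝ)) s :=
      ContDiffAt.prodMk contDiffAt_const contDiffAt_id
    have h3 : DifferentiableAt ℝ (fun s' => F r s') s := (h1.comp s h2).differentiableAt (by simp)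
    have h4 := h3.hasDerivAt
    have h5 : deriv (fun s' => F r s') s = u (r - s ^ 2) / s ^ 2 := hFs r s hs
    rwa [h5] at h4
  -- first s-derivative of p
  have hps : ∀ r s : ℝ, 0 < s →
      HasDerivAt (fun s' => p r s') (F r s + v r + u (r - s ^ 2) / s) s := by
    intro r s hs
    have h1 : HasDerivAt (fun s' : ℝ => s' * (F r s' + v r))
        (1 * (F r s + v r) + s * (u (r - s ^ 2) / s ^ 2 + 0)) s :=
      (hasDerivAt_id s).mul ((hFsd r s hs).add (hasDerivAt_const s (v r)))
    have h2 : (1 : ℝ) * (F r s + v r) + s * (u (r - s ^ 2) / s ^ 2 + 0)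
        = F r s + v r + u (r - s ^ 2) / s := by
      field_simp
      ring
    rw [h2] at h1
    simpa only [hp] using h1.congr_deriv rfl
  have hpsval : ∀ r s : ℝ, 0 < s → ps p r s = F r s + v r + u (r - s ^ 2) / s := by
    intro r s hs
    exact (hps r s hs).deriv
  intro r s hs
  have hs' : s ≠ 0 := ne_of_gt hs
  -- p_r
  have hpr : pr p r s = s * (deriv (fun r' => F r' s) r + deriv v r) := by
    have h1 : HasDerivAt (fun r' => F r' s + v r')
        (deriv (fun r' => F r' s) r + deriv v r) r :=
      (hFr r s hs).hasDerivAt.add (hvdiff r).hasDerivAt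
    have h2 := h1.const_mul s
    have h3 : (fun r' => s * (F r' s + v r')) = fun r' => p r' s := by
      funext r'; rw [hp]
    rw [h3] at h2
    exact h2.deriv
  -- p_rs
  have hprs : prs p r s =
      deriv (fun r' => F r' s) r + deriv v r + deriv u (r - s ^ 2) / s := by
    have hfun : (fun r' => ps p r' s) = fun r' => F r' s + v r' + u (r' - s ^ 2) / s :=
      funext fun r' => hpsval r' s hs
    have hinner : HasDerivAt (fun r' : ℝ => r' - s ^ 2) 1 r := (hasDerivAt_id r).sub_const _
    have hcomp : HasDerivAt (fun r' => u (r' - s ^ 2)) (deriv u (r - s ^ 2) * 1) r :=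
      (hudiff _).hasDerivAt.comp r hinner
    have h1 : HasDerivAt (fun r' => F r' s + v r' + u (r' - s ^ 2) / s)
        (deriv (fun r' => F r' s) r + deriv v r + deriv u (r - s ^ 2) * 1 / s) r :=
      ((hFr r s hs).hasDerivAt.add (hvdiff r).hasDerivAt).add (hcomp.div_const s)
    rw [prs, hfun, h1.deriv]
    ring
  -- p_ss
  have hpss : pss p r s = -2 * deriv u (r - s ^ 2) := by
    have hev : (fun s' => ps p r s') =ᶠ[nhds s]
        fun s' => F r s' + v r + u (r - s' ^ 2) / s' := by
      filter_upwards [eventually_gt_nhds hs] with s' hs' using hpsval r s' hs'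
    have hinner : HasDerivAt (fun s' : ℝ => r - s' ^ 2) (-(2 * s ^ 1)) s :=
      (hasDerivAt_pow 2 s).const_sub r
    have hnum : HasDerivAt (fun s' => u (r - s' ^ 2))
        (deriv u (r - s ^ 2) * -(2 * s ^ 1)) s :=
      (hudiff _).hasDerivAt.comp s hinner
    have hquot : HasDerivAt (fun s' => u (r - s' ^ 2) / s')
        ((deriv u (r - s ^ 2) * -(2 * s ^ 1) * s - u (r - s ^ 2) * 1) / s ^ 2) s :=
      hnum.div (hasDerivAt_id s) hs'
    have h1 : HasDerivAt (fun s' => F r s' + v r + u (r - s' ^ 2) / s')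
        (u (r - s ^ 2) / s ^ 2 + 0 +
          (deriv u (r - s ^ 2) * -(2 * s ^ 1) * s - u (r - s ^ 2) * 1) / s ^ 2) s :=
      ((hFsd r s hs).add (hasDerivAt_const s (v r))).add hquot
    have h2 : pss p r s = deriv (fun s' => F r s' + v r + u (r - s' ^ 2) / s') s := by
      rw [pss]; exact hev.deriv_eq
    rw [h2, h1.deriv]
    field_simp
    ring
  rw [hpr, hprs, hpss]
  field_simp
  ring
end
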